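/- Let Δ be a simplicial tree and let M = {F₁, …, F_s} and N = {G₁, …, G_s} be two s-matchings of Δ. Then there exist indices i, j ∈ {1, …, s} such that F_i ∩ G_k = ∅ for all k ≠ j. -/

import Mathlib

noncomputable section

open Finset MvPolynomial

/-- A simplicial complex on the vertex type `V`: a finite, nonempty collection of
finite subsets of `V` that is closed under taking subsets. -/
structure SimplicialComplex (V : Type) [DecidableEq V] : Type where
  faces : Finset (Finset V)
  nonempty' : faces.Nonempty
  down_closed : ∀ ⦃F G : Finset V⦄, F ∈ faces → G ⊆ F → G ∈ faces

namespace SimplicialComplex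

variable {V : Type} [DecidableEq V]

open scoped Classical in
/-- The facets: the maximal faces with respect to inclusion. -/
def facets (Δ : SimplicialComplex V) : Finset (Finset V) :=
  Δ.faces.filter fun F => ∀ G ∈ Δ.faces, F ⊆ G → F = G

/-- A matching: a set of pairwise disjoint facets. -/
def IsMatching (Δ : SimplicialComplex V) (M : Finset (Finset V)) : Prop :=
  M ⊆ Δ.facets ∧ ∀ F ∈ M, ∀ G ∈ M, F ≠ G → F ∩ G = ∅

/-- The matching number `ν(Δ)`: the maximum cardinality of a matching. -/
def matchingNumber (Δ : SimplicialComplex V) : ℕ :=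
  sSup {r : ℕ | ∃ M : Finset (Finset V), Δ.IsMatching M ∧ M.card = r}

/-- `F` is a leaf of the subcomplex generated by the facet set `S`: either `F` is
the only facet, or there is another facet `G` with `H ∩ F ⊆ G ∩ F` for all
facets `H ≠ F`. -/
def IsLeafIn (S : Finset (Finset V)) (F : Finset V) : Prop :=
  F ∈ S ∧ (S = {F} ∨ ∃ G ∈ S, G ≠ F ∧ ∀ H ∈ S, H ≠ F → H ∩ F ⊆ G ∩ F)

/-- A simplicial forest: every nonempty subcomplex has a leaf (equivalently,
every connected component is a simplicial tree). -/
def IsForest (Δ : SimplicialComplex V) : Prop :=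
  ∀ S ⊆ Δ.facets, S.Nonempty → ∃ F, IsLeafIn S F

/-- Connectedness: any two facets are joined by a chain of facets in which
consecutive facets intersect nontrivially. -/
def Connected (Δ : SimplicialComplex V) : Prop :=
  ∀ F ∈ Δ.facets, ∀ G ∈ Δ.facets,
    Relation.ReflTransGen
      (fun A B => A ∈ Δ.facets ∧ B ∈ Δ.facets ∧ (A ∩ B).Nonempty) F G

/-- A simplicial tree: a connected simplicial forest. -/
def IsTree (Δ : SimplicialComplex V) : Prop := Δ.Connected ∧ Δ.IsForest

/-- A good leaf: a facet which is a leaf of every subcomplex containing it. -/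
def IsGoodLeaf (Δ : SimplicialComplex V) (F : Finset V) : Prop :=
  F ∈ Δ.facets ∧ ∀ S ⊆ Δ.facets, F ∈ S → IsLeafIn S F

/-- Two disjoint facets `F`, `G` form a gap: the induced subcomplex on `F ∪ G`
has facet set exactly `{F, G}`. -/
def FormGap (Δ : SimplicialComplex V) (F G : Finset V) : Prop :=
  F ∈ Δ.facets ∧ G ∈ Δ.facets ∧ F ∩ G = ∅ ∧
    ∀ H ∈ Δ.facets, H ⊆ F ∪ G → H = F ∨ H = G

/-- A restricted matching: a matching one of whose facets forms a gap with every
other facet of the matching. -/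
def IsRestrictedMatching (Δ : SimplicialComplex V) (M : Finset (Finset V)) : Prop :=
  Δ.IsMatching M ∧ ∃ F ∈ M, ∀ G ∈ M, G ≠ F → Δ.FormGap F G

/-- The restricted matching number `ν₀(Δ)`. -/
def restrictedMatchingNumber (Δ : SimplicialComplex V) : ℕ :=
  sSup {r : ℕ | ∃ M : Finset (Finset V), Δ.IsRestrictedMatching M ∧ M.card = r}

/-- An induced matching: a matching `M` such that the facets contained in the
union of the members of `M` are exactly the members of `M`. -/
def IsInducedMatching (Δ : SimplicialComplex V) (M : Finset (Finset V)) : Prop :=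
  Δ.IsMatching M ∧ ∀ H ∈ Δ.facets, H ⊆ M.biUnion id → H ∈ M

/-- The induced matching number `ν₁(Δ)`. -/
def inducedMatchingNumber (Δ : SimplicialComplex V) : ℕ :=
  sSup {r : ℕ | ∃ M : Finset (Finset V), Δ.IsInducedMatching M ∧ M.card = r}

/-- A proper chain of length `n` between the facets `F` and `G`. -/
def ProperChain (Δ : SimplicialComplex V) (F G : Finset V) (n : ℕ) : Prop :=
  ∃ c : ℕ → Finset V, c 0 = F ∧ c n = G ∧ (∀ i ≤ n, c i ∈ Δ.facets) ∧
    ∀ i < n, (c i ∩ c (i + 1)).card = (c (i + 1)).card - 1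

/-- The distance between two facets: the minimal length of a proper chain. -/
def dist (Δ : SimplicialComplex V) (F G : Finset V) : ℕ :=
  sInf {n : ℕ | Δ.ProperChain F G n}

/-- The intersection property for a pure complex whose facets have cardinality
`t` (`= d + 1`): it is connected in codimension 1, and any two facets `F`, `G`
with `|F ∩ G| = t - k` (`1 ≤ k ≤ t`) satisfy `dist(F, G) = k`. -/
def HasIntersectionProperty (Δ : SimplicialComplex V) (t : ℕ) : Prop :=
  (∀ F ∈ Δ.facets, F.card = t) ∧
    (∀ F ∈ Δ.facets, ∀ G ∈ Δ.facets, ∃ n, Δ.ProperChain F G n) ∧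
    ∀ F ∈ Δ.facets, ∀ G ∈ Δ.facets, ∀ k, 1 ≤ k → k ≤ t →
      (F ∩ G).card = t - k → Δ.dist F G = k

end SimplicialComplex

/-- The simplicial complex generated by a finite family of faces. -/
def ofFacets {V : Type} [DecidableEq V] (ℱ : Finset (Finset V)) :
    SimplicialComplex V where
  faces := insert ∅ (ℱ.biUnion Finset.powerset)
  nonempty' := ⟨∅, Finset.mem_insert_self _ _⟩
  down_closed := by
    intro F G hF hGF
    rcases Finset.mem_insert.mp hF with h | h
    · subst h
      exact Finset.mem_insert.mpr <| Or.inl (Finset.subset_empty.mp hGF)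
    · rcases Finset.mem_biUnion.mp h with ⟨A, hA, hFA⟩
      exact Finset.mem_insert.mpr <| Or.inr <| Finset.mem_biUnion.mpr
        ⟨A, hA, Finset.mem_powerset.mpr (hGF.trans (Finset.mem_powerset.mp hFA))⟩

/-- The ideal of `K[x_v : v ∈ V]` generated by the products
`x_{F₁} ⋯ x_{F_k}` over all `k`-matchings `{F₁, …, F_k}` taken from the facet
set `ℱ`.  For `ℱ = ℱ(Δ)` this is the `k`-th squarefree power `I(Δ)^{[k]}` of the
facet ideal `I(Δ)` (and the facet ideal itself for `k = 1`). -/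
def matchPow (K : Type) [Field K] {V : Type} [DecidableEq V]
    (ℱ : Finset (Finset V)) (k : ℕ) : Ideal (MvPolynomial V K) :=
  Ideal.span {p | ∃ M : Finset (Finset V), M ⊆ ℱ ∧
    (∀ F ∈ M, ∀ G ∈ M, F ≠ G → F ∩ G = ∅) ∧ M.card = k ∧
    p = ∏ F ∈ M, ∏ v ∈ F, (X v : MvPolynomial V K)}

/-- The `k`-th squarefree power `I(Δ)^{[k]}` of the facet ideal of `Δ`. -/
def sqfreePower (K : Type) [Field K] {V : Type} [DecidableEq V]
    (Δ : SimplicialComplex V) (k : ℕ) : Ideal (MvPolynomial V K) :=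
  matchPow K Δ.facets k

/-- `p` is a monomial with coefficient `1`. -/
def IsMonomialOne {K : Type} [Field K] {V : Type} (p : MvPolynomial V K) : Prop :=
  ∃ d : V →₀ ℕ, p = monomial d 1

/-- `u` is a minimal monomial generator of the monomial ideal `I`: `u` is a
monomial of `I` which is not strictly divisible by any monomial of `I`. -/
def IsMinGen {K : Type} [Field K] {V : Type} (I : Ideal (MvPolynomial V K))
    (u : MvPolynomial V K) : Prop :=
  IsMonomialOne u ∧ u ∈ I ∧
    ∀ v : MvPolynomial V K, IsMonomialOne v → v ∈ I → v ∣ u → v = u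

/-- A monomial ideal `I` has linear quotients: its minimal monomial generators
can be listed as `f₁, …, f_m` so that each colon ideal
`(f₁, …, f_{i-1}) : (f_i)` is generated by a subset of the variables. -/
def HasLinearQuotients {K : Type} [Field K] {V : Type}
    (I : Ideal (MvPolynomial V K)) : Prop :=
  ∃ L : List (MvPolynomial V K), L.Nodup ∧ (∀ u, u ∈ L ↔ IsMinGen I u) ∧
    ∀ i : ℕ, ∀ hi : i < L.length, 1 ≤ i →
      ∃ s : Set V,
        Submodule.colon (Ideal.span {q | q ∈ L.take i}) (Ideal.span {L.get ⟨i, hi⟩}) =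
          Ideal.span ((fun v => (X v : MvPolynomial V K)) '' s)

/-- The degree of the monomial with exponent vector `d`. -/
def degOf {V : Type} (d : V →₀ ℕ) : ℕ := d.sum fun _ n => n

/-- The edge relation of the induced graph `G_I^{(u,v)}` of Bigdeli–Herzog–Zheng,
for a monomial ideal `I` generated in degree `d`, where `m` is the exponent
vector of `lcm(u, v)`: two minimal monomial generators (identified with their
exponent vectors) dividing `lcm(u, v)` are adjacent when their lcm has degree
`d + 1`. -/
def EdgeRel (K : Type) [Field K] {V : Type} [DecidableEq V]
    (I : Ideal (MvPolynomial V K)) (d : ℕ) (m : V →₀ ℕ) (u v : V →₀ ℕ) : Prop :=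
  IsMinGen I (monomial u (1 : K)) ∧ IsMinGen I (monomial v (1 : K)) ∧
    u ≤ m ∧ v ≤ m ∧ degOf (u ⊔ v) = d + 1

/-- The combinatorial criterion of Bigdeli–Herzog–Zheng for a monomial ideal `I`
generated in degree `d` to be linearly related: any two minimal monomial
generators `u`, `v` are connected by a path in `G_I^{(u,v)}`. -/
def LinearlyRelatedVia (K : Type) [Field K] {V : Type} [DecidableEq V]
    (I : Ideal (MvPolynomial V K)) (d : ℕ) : Prop :=
  ∀ a b : V →₀ ℕ, IsMinGen I (monomial a (1 : K)) → IsMinGen I (monomial b (1 : K)) →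
    Relation.ReflTransGen (EdgeRel K I d (a ⊔ b)) a b

/-- The `t`-path simplicial tree `Γ_{n,t}` of the path graph `P_n` on the
vertices `1, …, n`: its facets are the intervals `F_i = {i, …, i + t - 1}` for
`1 ≤ i ≤ n - t + 1`. -/
def pathFacets (n t : ℕ) : Finset (Finset ℕ) :=
  (Finset.Icc 1 (n - t + 1)).image fun i => Finset.Icc i (i + t - 1)

/-- The `t`-path simplicial tree `Γ_{n,t}` of the path graph `P_n`. -/
def pathComplex (n t : ℕ) : SimplicialComplex ℕ := ofFacets (pathFacets n t)

/-! A leaf `F` of the subcomplex spanned by `M ∪ N` meets at most one facet of the other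
matching: everything `F` shares with other facets lies in its branch facet `G₀`, and `G₀`
either belongs to that matching or is disjoint from `F`. If `F ∈ M` we are done; otherwise
`F ∈ N` meets at most one `H₀ ∈ M`, and induction on the matchings `M \ {H₀}` and
`N \ {F}` gives a facet of `M` that misses `F` as well. -/

namespace SimplicialComplex

variable {V : Type} [DecidableEq V]

def MeetsAtMostOne (F : Finset V) (N : Finset (Finset V)) : Prop :=
  ∀ G ∈ N, ∀ G' ∈ N, (F ∩ G).Nonempty → (F ∩ G').Nonempty → G = G'

lemma meetsAtMostOne_singleton (F G : Finset V) : MeetsAtMostOne F {G} := by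
  intro A hA B hB _ _
  rw [mem_singleton.mp hA, mem_singleton.mp hB]

lemma eq_of_inter_nonempty {P : Finset (Finset V)}
    (hP : ∀ A ∈ P, ∀ B ∈ P, A ≠ B → A ∩ B = ∅) {A B : Finset V} (hA : A ∈ P) (hB : B ∈ P)
    (hAB : (A ∩ B).Nonempty) : A = B := by
  by_contra hne
  exact hAB.ne_empty (hP A hA B hB hne)

lemma meetsAtMostOne_of_mem {F : Finset V} {P : Finset (Finset V)}
    (hP : ∀ A ∈ P, ∀ B ∈ P, A ≠ B → A ∩ B = ∅) (hF : F ∈ P) : MeetsAtMostOne F P :=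
  fun _ hG _ hG' hFG hFG' =>
    (eq_of_inter_nonempty hP hF hG hFG).symm.trans (eq_of_inter_nonempty hP hF hG' hFG')

lemma MeetsAtMostOne.exists_forall_ne_inter_eq_empty {F : Finset V} {N : Finset (Finset V)}
    (hF : MeetsAtMostOne F N) (hN : N.Nonempty) :
    ∃ G ∈ N, ∀ G' ∈ N, G' ≠ G → F ∩ G' = ∅ := by
  by_cases hmeet : ∃ G ∈ N, (F ∩ G).Nonempty
  · obtain ⟨G, hG, hFG⟩ := hmeet
    refine ⟨G, hG, fun G' hG' hne => ?_⟩
    by_contra hFG'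
    exact hne (hF G' hG' G hG (nonempty_iff_ne_empty.mpr hFG') hFG)
  · push Not at hmeet
    obtain ⟨G, hG⟩ := hN
    exact ⟨G, hG, fun G' hG' _ => hmeet G' hG'⟩

lemma MeetsAtMostOne.of_erase {F G : Finset V} {N : Finset (Finset V)}
    (hF : MeetsAtMostOne F (N.erase G)) (hFG : F ∩ G = ∅) : MeetsAtMostOne F N := by
  have mem_erase_of_meets {A : Finset V} (hA : A ∈ N) (hFA : (F ∩ A).Nonempty) :
      A ∈ N.erase G :=
    mem_erase.mpr ⟨by rintro rfl; exact hFA.ne_empty hFG, hA⟩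
  exact fun A hA B hB hFA hFB =>
    hF A (mem_erase_of_meets hA hFA) B (mem_erase_of_meets hB hFB) hFA hFB

lemma IsLeafIn.meetsAtMostOne {P Q : Finset (Finset V)} {F : Finset V}
    (hleaf : IsLeafIn (P ∪ Q) F) (hFQ : F ∈ Q)
    (hP : ∀ A ∈ P, ∀ B ∈ P, A ≠ B → A ∩ B = ∅) (hQ : ∀ A ∈ Q, ∀ B ∈ Q, A ≠ B → A ∩ B = ∅) :
    MeetsAtMostOne F P := by
  by_cases hFP : F ∈ P
  · exact meetsAtMostOne_of_mem hP hFP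
  obtain ⟨-, hsingle | ⟨G₀, hG₀, hG₀F, hbranch⟩⟩ := hleaf
  · have hPF : P ⊆ {F} := hsingle ▸ subset_union_left
    intro G hG
    exact absurd (mem_singleton.mp (hPF hG) ▸ hG) hFP
  have meets_branch {G : Finset V} (hG : G ∈ P) (hFG : (F ∩ G).Nonempty) :
      (G₀ ∩ F ∩ G).Nonempty := by
    obtain ⟨x, hx⟩ := hFG
    have hxG₀ := hbranch G (mem_union_left Q hG) (by rintro rfl; exact hFP hG)
      (by rwa [inter_comm] at hx)
    exact ⟨x, mem_inter.mpr ⟨hxG₀, (mem_inter.mp hx).2⟩⟩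
  intro G hG G' hG' hFG hFG'
  rcases mem_union.mp hG₀ with hG₀P | hG₀Q
  · have meets_G₀ {A : Finset V} (hA : A ∈ P) (hFA : (F ∩ A).Nonempty) : G₀ = A :=
      eq_of_inter_nonempty hP hG₀P hA <|
        (meets_branch hA hFA).mono (inter_subset_inter_right inter_subset_left)
    exact (meets_G₀ hG hFG).symm.trans (meets_G₀ hG' hFG')
  · exact absurd (hQ G₀ hG₀Q F hFQ hG₀F) ((meets_branch hG hFG).mono inter_subset_left).ne_empty

lemma IsMatching.mono {Δ : SimplicialComplex V} {M M' : Finset (Finset V)}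
    (hM : Δ.IsMatching M) (hM' : M' ⊆ M) : Δ.IsMatching M' :=
  ⟨hM'.trans hM.1, fun A hA B hB => hM.2 A (hM' hA) B (hM' hB)⟩

lemma IsForest.exists_meetsAtMostOne {Δ : SimplicialComplex V} (hΔ : Δ.IsForest) (n : ℕ)
    {M N : Finset (Finset V)} (hM : Δ.IsMatching M) (hN : Δ.IsMatching N)
    (hMn : M.card = n + 1) (hNn : N.card = n + 1) : ∃ F ∈ M, MeetsAtMostOne F N := by
  induction n generalizing M N with
  | zero =>
    obtain ⟨G, rfl⟩ := card_eq_one.mp hNn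
    obtain ⟨F, hF⟩ := card_pos.mp (by omega : 0 < M.card)
    exact ⟨F, hF, meetsAtMostOne_singleton F G⟩
  | succ n ih =>
    obtain ⟨F, hleaf⟩ := hΔ (M ∪ N) (union_subset hM.1 hN.1)
      ((card_pos.mp (by omega : 0 < M.card)).mono subset_union_left)
    by_cases hFM : F ∈ M
    · exact ⟨F, hFM, (union_comm M N ▸ hleaf).meetsAtMostOne hFM hN.2 hM.2⟩
    have hFN : F ∈ N := (mem_union.mp hleaf.1).resolve_left hFM
    obtain ⟨H₀, hH₀, hFmisses⟩ :=
      (hleaf.meetsAtMostOne hFN hM.2 hN.2).exists_forall_ne_inter_eq_empty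
        (card_pos.mp (by omega : 0 < M.card))
    obtain ⟨F', hF', hF'N⟩ := ih (hM.mono (erase_subset H₀ M)) (hN.mono (erase_subset F N))
      (by rw [card_erase_of_mem hH₀, hMn]; rfl) (by rw [card_erase_of_mem hFN, hNn]; rfl)
    refine ⟨F', mem_of_mem_erase hF', hF'N.of_erase ?_⟩
    rw [inter_comm]
    exact hFmisses F' (mem_of_mem_erase hF') (ne_of_mem_erase hF')

end SimplicialComplex

/-- Given two `s`-matchings `M`, `N` of a simplicial tree,
there is a facet of `M` meeting at most one facet of `N`. -/
theorem exists_facet_meeting_at_most_one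
    {V : Type} [DecidableEq V] (Δ : SimplicialComplex V) (hΔ : Δ.IsTree)
    (s : ℕ) (hs : 1 ≤ s) (M N : Finset (Finset V))
    (hM : Δ.IsMatching M) (hN : Δ.IsMatching N)
    (hMs : M.card = s) (hNs : N.card = s) :
    ∃ F ∈ M, ∃ G ∈ N, ∀ G' ∈ N, G' ≠ G → F ∩ G' = ∅ := by
  obtain ⟨n, rfl⟩ := Nat.exists_eq_add_of_le' hs
  obtain ⟨F, hF, hFN⟩ := hΔ.2.exists_meetsAtMostOne n hM hN hMs hNs
  exact ⟨F, hF, hFN.exists_forall_ne_inter_eq_empty (card_pos.mp (by omega : 0 < N.card))⟩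

end
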